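/- arXiv:1903.00960 — 2 statements merged into one kernel-verified Lean document; each statement's English description precedes it below -/
import Mathlib

section
/- The function F(λ) = 2·log((2+√(λ²+4))/λ) − √(λ²+4) has exactly one zero on the positive reals (0, ∞). -/
/-!
`F` is strictly decreasing on `(0, ∞)`, since `F'(λ) = -√(λ² + 4) / λ`, so it has at most one
zero there. For a zero to exist it suffices to find a sign change; substituting `λ = 4r / (r² - 1)`
with `r > 1` makes `√(λ² + 4)` rational and `F(λ) = 2 log r - 2 (r² + 1) / (r² - 1)`, which is
negative at `r = 2` and positive at `r = 5`.
-/

open Real Set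

theorem existsUnique_eq_of_injOn {X α : Type*} [TopologicalSpace X] [LinearOrder α]
    [TopologicalSpace α] [OrderClosedTopology α] {s : Set X} {f : X → α} (hs : IsPreconnected s)
    (hf : ContinuousOn f s) (hinj : InjOn f s) {a b : X} (ha : a ∈ s) (hb : b ∈ s) {y : α}
    (hy : y ∈ Icc (f a) (f b)) : ∃! x, x ∈ s ∧ f x = y := by
  obtain ⟨x, hx, rfl⟩ := hs.intermediate_value ha hb hf hy
  exact ⟨x, ⟨hx, rfl⟩, fun x' ⟨hx', hfx'⟩ => hinj hx' hx hfx'⟩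

namespace KissingCritical

noncomputable def F (x : ℝ) : ℝ :=
  2 * log ((2 + √(x ^ 2 + 4)) / x) - √(x ^ 2 + 4)

theorem hasDerivAt_F {x : ℝ} (hx : 0 < x) : HasDerivAt F (-√(x ^ 2 + 4) / x) x := by
  set s := √(x ^ 2 + 4) with hs
  have hs_pos : 0 < s := by positivity
  have hs_sq : s ^ 2 = x ^ 2 + 4 := sq_sqrt (by positivity)
  have hsqrt : HasDerivAt (fun y => √(y ^ 2 + 4)) (x / s) x := by
    convert ((hasDerivAt_pow 2 x).add_const 4).sqrt (by positivity) using 1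
    rw [← hs]
    field_simp
    norm_num [mul_comm]
  have hsplit : HasDerivAt (fun y => 2 * (log (2 + √(y ^ 2 + 4)) - log y) - √(y ^ 2 + 4))
      (2 * (x / s / (2 + s) - x⁻¹) - x / s) x :=
    ((((hsqrt.const_add 2).log (by positivity)).sub (hasDerivAt_log hx.ne')).const_mul 2).sub
      hsqrt
  have hderiv : 2 * (x / s / (2 + s) - x⁻¹) - x / s = -s / x := by
    field_simp
    linear_combination s * hs_sq
  rw [← hderiv]
  refine hsplit.congr_of_eventuallyEq ?_
  filter_upwards [Ioi_mem_nhds hx] with y hy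
  rw [F, log_div (by positivity) (ne_of_gt hy)]

theorem continuousOn_F : ContinuousOn F (Ioi 0) :=
  fun _ hx => (hasDerivAt_F hx).continuousAt.continuousWithinAt

theorem strictAntiOn_F : StrictAntiOn F (Ioi 0) := by
  refine strictAntiOn_of_deriv_neg (convex_Ioi 0) continuousOn_F fun x hx => ?_
  rw [interior_Ioi] at hx
  rw [(hasDerivAt_F hx).deriv]
  exact div_neg_of_neg_of_pos (neg_neg_of_pos (by positivity)) hx

theorem F_four_mul_div_sq_sub_one {r : ℝ} (hr : 1 < r) :
    F (4 * r / (r ^ 2 - 1)) = 2 * log r - 2 * (r ^ 2 + 1) / (r ^ 2 - 1) := by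
  have hd : 0 < r ^ 2 - 1 := by nlinarith
  have hsqrt : √((4 * r / (r ^ 2 - 1)) ^ 2 + 4) = 2 * (r ^ 2 + 1) / (r ^ 2 - 1) := by
    rw [sqrt_eq_iff_eq_sq (by positivity) (by positivity)]
    field_simp
    ring
  have hratio : (2 + 2 * (r ^ 2 + 1) / (r ^ 2 - 1)) / (4 * r / (r ^ 2 - 1)) = r := by
    field_simp
    ring
  rw [F, hsqrt, hratio]

theorem F_eight_thirds_neg : F (8 / 3) < 0 := by
  have h := F_four_mul_div_sq_sub_one (r := 2) (by norm_num)
  norm_num at h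
  rw [h]
  linarith [log_two_lt_d9]

theorem F_five_sixths_pos : 0 < F (5 / 6) := by
  have h := F_four_mul_div_sq_sub_one (r := 5) (by norm_num)
  norm_num at h
  rw [h]
  have hlog : log 4 < log 5 := log_lt_log (by norm_num) (by norm_num)
  have hlog4 : log 4 = 2 * log 2 := by
    rw [show (4 : ℝ) = 2 ^ 2 by norm_num, log_pow, Nat.cast_ofNat]
  linarith [log_two_gt_d9]

end KissingCritical

open KissingCritical in
/-- The function F(λ) = 2·log((2+√(λ²+4))/λ) − √(λ²+4) has exactly one zero on (0,∞). -/
theorem unique_positive_zero_of_critical_equation :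
    ∃! lam : ℝ, lam ∈ Set.Ioi (0 : ℝ) ∧
      2 * Real.log ((2 + Real.sqrt (lam ^ 2 + 4)) / lam) - Real.sqrt (lam ^ 2 + 4) = 0 :=
  existsUnique_eq_of_injOn isPreconnected_Ioi continuousOn_F strictAntiOn_F.injOn
    (a := 8 / 3) (b := 5 / 6) (by norm_num) (by norm_num)
    ⟨F_eight_thirds_neg.le, F_five_sixths_pos.le⟩
end

section
/- If λ_c > 0 satisfies 2·log((2+√(λ_c²+4))/λ_c) − √(λ_c²+4) = 0, then for every λ > λ_c one has log((2+√(4+λ²))/λ) − √(4+λ²)/2 < 0. -/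
/-!
Writing `s = √(4 + λ²)`, the function is `(log (2 + s) - s / 2) - log λ`. The bracket is
antitone in `s ≥ 0` because `log ((2 + t) / (2 + s)) ≤ (t - s) / (2 + s) ≤ (t - s) / 2`, and `s`
increases with `λ`, while `-log λ` is strictly decreasing. So the function is strictly decreasing
on `λ > 0`, and it vanishes at `λ_c` by the defining equation.
-/

open Real Set

theorem antitoneOn_log_two_add_sub_half :
    AntitoneOn (fun s : ℝ => log (2 + s) - s / 2) (Ici 0) := by
  intro s hs t _ hst
  have hs : (0 : ℝ) ≤ s := hs
  have h2s : 0 < 2 + s := by linarith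
  have hlog : log (2 + t) - log (2 + s) ≤ (t - s) / (2 + s) :=
    calc log (2 + t) - log (2 + s) = log ((2 + t) / (2 + s)) :=
          (log_div (by linarith) h2s.ne').symm
      _ ≤ (2 + t) / (2 + s) - 1 := log_le_sub_one_of_pos (div_pos (by linarith) h2s)
      _ = (t - s) / (2 + s) := by field_simp; ring
  have hfrac : (t - s) / (2 + s) ≤ (t - s) / 2 :=
    div_le_div_of_nonneg_left (by linarith) two_pos (by linarith)
  simp only
  linarith

/-- `ψ(0)` as a function of `λ`. -/
noncomputable def psiZero (lam : ℝ) : ℝ :=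
  log ((2 + √(4 + lam ^ 2)) / lam) - √(4 + lam ^ 2) / 2

theorem psiZero_eq {lam : ℝ} (hlam : 0 < lam) :
    psiZero lam = (log (2 + √(4 + lam ^ 2)) - √(4 + lam ^ 2) / 2) - log lam := by
  rw [psiZero, log_div (by positivity) hlam.ne']
  ring

theorem strictAntiOn_psiZero : StrictAntiOn psiZero (Ioi 0) := by
  intro a (ha : 0 < a) b (hb : 0 < b) hab
  have hsqrt : √(4 + a ^ 2) ≤ √(4 + b ^ 2) := by gcongr
  have hbracket := antitoneOn_log_two_add_sub_half (sqrt_nonneg _) (sqrt_nonneg _) hsqrt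
  have hlog : log a < log b := log_lt_log ha hab
  rw [psiZero_eq ha, psiZero_eq hb]
  simp only at hbracket
  linarith

/-- If λ_c > 0 solves 2·log((2+√(λ_c²+4))/λ_c) − √(λ_c²+4) = 0, then for every λ > λ_c,
log((2+√(4+λ²))/λ) − √(4+λ²)/2 < 0. -/
theorem psi_zero_neg_of_gt_critical (lamc : ℝ) (hc : 0 < lamc)
    (heq : 2 * Real.log ((2 + Real.sqrt (lamc ^ 2 + 4)) / lamc) - Real.sqrt (lamc ^ 2 + 4) = 0) :
    ∀ lam : ℝ, lamc < lam →
      Real.log ((2 + Real.sqrt (4 + lam ^ 2)) / lam) - Real.sqrt (4 + lam ^ 2) / 2 < 0 := by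
  intro lam hlam
  have hcrit : psiZero lamc = 0 := by
    rw [psiZero, add_comm 4]
    linarith
  have hlt : psiZero lam < psiZero lamc := strictAntiOn_psiZero hc (hc.trans hlam) hlam
  rwa [hcrit] at hlt
end
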